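/- Let k ∈ [0,1), let k* be the dual modulus with (k*)² = −k²/(1−k²), and let θ̄ ∈ (0,π/2). Then sc(θ̄·2K(k)/π | k) · sc((π/2−θ̄)·2K(k*)/π | k*) = 1. Equivalently, the Z-invariant Ising coupling constants satisfy the Kramers–Wannier duality relation sinh(2J(θ̄|k))·sinh(2J(π/2−θ̄|k*)) = 1, so the Z-invariant Ising model with modulus k on an isoradial graph and the one with modulus k* on the dual isoradial graph are dual to each other. -/

import Mathlib

open Real Filter

/-- Complete elliptic integral of the first kind `K`, as a function of the
squared modulus `m = k²`. -/
noncomputable def ellK (m : ℝ) : ℝ :=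
  ∫ τ in (0:ℝ)..(π/2), 1 / Real.sqrt (1 - m * Real.sin τ ^ 2)

/-- The incomplete elliptic integral of the first kind
`φ ↦ ∫₀^φ (1 - k² sin² t)^{-1/2} dt`, as a function of the squared modulus `m = k²`. -/
noncomputable def amF (m φ : ℝ) : ℝ :=
  ∫ t in (0:ℝ)..φ, 1 / Real.sqrt (1 - m * Real.sin t ^ 2)

/-- Jacobi's amplitude, the inverse of `amF m`, squared modulus `m = k²`. -/
noncomputable def am (m u : ℝ) : ℝ := Function.invFun (amF m) u

/-- Jacobi elliptic function `sn`, squared modulus `m = k²`. -/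
noncomputable def sn (u m : ℝ) : ℝ := Real.sin (am m u)

/-- Jacobi elliptic function `cn`, squared modulus `m = k²`. -/
noncomputable def cn (u m : ℝ) : ℝ := Real.cos (am m u)

/-- Jacobi elliptic function `dn`, squared modulus `m = k²`. -/
noncomputable def dn (u m : ℝ) : ℝ := Real.sqrt (1 - m * sn u m ^ 2)

/-- Jacobi elliptic function `sc = sn/cn`, squared modulus `m = k²`. -/
noncomputable def sc (u m : ℝ) : ℝ := sn u m / cn u m

/-
The substitution `t ↦ π/2 - t` in the incomplete elliptic integral turns the modulus `m` into
the dual modulus `m* = -m/(1-m)`, because `1 - m* cos² t = (1 - m sin² t)/(1 - m)`. Hence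
`F(π/2 | m*) - F(π/2 - φ | m*) = √(1-m) F(φ | m)`; at `φ = π/2` this gives `K(m*) = √(1-m) K(m)`,
so if `θ̄ 2K(m)/π = F(φ | m)` then `(π/2 - θ̄) 2K(m*)/π = F(π/2 - φ | m*)`. Inverting, the two
amplitudes are `φ` and `π/2 - φ`, and `tan φ · tan (π/2 - φ) = 1`.
-/

section EllipticIntegral

variable {m : ℝ}

lemma one_sub_mul_sin_sq_pos (hm : m < 1) (t : ℝ) : 0 < 1 - m * sin t ^ 2 := by
  rcases le_or_gt m 0 with h | h
  · nlinarith [sq_nonneg (sin t)]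
  · nlinarith [sin_sq_le_one t]

lemma continuous_ellipticIntegrand (hm : m < 1) :
    Continuous fun t => 1 / √(1 - m * sin t ^ 2) :=
  continuous_const.div (by fun_prop) fun t => (sqrt_pos.mpr (one_sub_mul_sin_sq_pos hm t)).ne'

lemma amF_sub_amF (hm : m < 1) (a b : ℝ) :
    amF m b - amF m a = ∫ t in a..b, 1 / √(1 - m * sin t ^ 2) :=
  intervalIntegral.integral_interval_sub_left
    ((continuous_ellipticIntegrand hm).intervalIntegrable 0 b)
    ((continuous_ellipticIntegrand hm).intervalIntegrable 0 a)

@[simp]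
lemma amF_zero (m : ℝ) : amF m 0 = 0 := intervalIntegral.integral_same

lemma amF_pi_div_two (m : ℝ) : amF m (π / 2) = ellK m := rfl

lemma continuous_amF (hm : m < 1) : Continuous (amF m) :=
  intervalIntegral.continuous_primitive
    (fun a b => (continuous_ellipticIntegrand hm).intervalIntegrable a b) 0

lemma amF_strictMono (hm : m < 1) : StrictMono (amF m) := by
  intro a b hab
  have hpos : 0 < ∫ t in a..b, 1 / √(1 - m * sin t ^ 2) :=
    intervalIntegral.intervalIntegral_pos_of_pos
      ((continuous_ellipticIntegrand hm).intervalIntegrable a b)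
      (fun t => one_div_pos.mpr (sqrt_pos.mpr (one_sub_mul_sin_sq_pos hm t))) hab
  linarith [amF_sub_amF hm a b]

lemma ellK_pos (hm : m < 1) : 0 < ellK m := by
  simpa [amF_pi_div_two] using amF_strictMono hm (by positivity : (0 : ℝ) < π / 2)

lemma am_amF (hm : m < 1) (φ : ℝ) : am m (amF m φ) = φ :=
  Function.leftInverse_invFun (amF_strictMono hm).injective φ

lemma exists_amF_eq_of_mem_Ioo (hm : m < 1) {u : ℝ} (hu : u ∈ Set.Ioo 0 (ellK m)) :
    ∃ φ ∈ Set.Ioo 0 (π / 2), amF m φ = u := by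
  rw [← amF_zero m, ← amF_pi_div_two] at hu
  exact intermediate_value_Ioo (by positivity) (continuous_amF hm).continuousOn hu

end EllipticIntegral

section DualModulus

variable {m : ℝ}

lemma dual_modulus_lt_one (hm : m < 1) : -m / (1 - m) < 1 := by
  rw [div_lt_one (by linarith)]
  linarith

lemma one_sub_dual_mul_cos_sq (hm : m < 1) (x : ℝ) :
    1 - -m / (1 - m) * cos x ^ 2 = (1 - m * sin x ^ 2) / (1 - m) := by
  have : 1 - m ≠ 0 := by linarith
  rw [cos_sq']
  field_simp
  ring

lemma ellK_dual_sub_amF_dual_pi_div_two_sub (hm : m < 1) (φ : ℝ) :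
    ellK (-m / (1 - m)) - amF (-m / (1 - m)) (π / 2 - φ) = √(1 - m) * amF m φ := by
  have hsubst := intervalIntegral.integral_comp_sub_left (a := 0) (b := φ)
    (fun t => 1 / √(1 - -m / (1 - m) * sin t ^ 2)) (π / 2)
  rw [sub_zero] at hsubst
  have hintegrand (x : ℝ) : 1 / √(1 - -m / (1 - m) * sin (π / 2 - x) ^ 2)
      = √(1 - m) * (1 / √(1 - m * sin x ^ 2)) := by
    rw [sin_pi_div_two_sub, one_sub_dual_mul_cos_sq hm,
      sqrt_div (one_sub_mul_sin_sq_pos hm x).le, one_div_div, mul_one_div]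
  rw [← amF_pi_div_two, amF_sub_amF (dual_modulus_lt_one hm), ← hsubst,
    intervalIntegral.integral_congr fun x _ => hintegrand x, intervalIntegral.integral_const_mul]
  rfl

lemma ellK_dual (hm : m < 1) : ellK (-m / (1 - m)) = √(1 - m) * ellK m := by
  simpa [amF_pi_div_two] using ellK_dual_sub_amF_dual_pi_div_two_sub hm (π / 2)

lemma am_dual_ellK_sub (hm : m < 1) (φ : ℝ) :
    am (-m / (1 - m)) (ellK (-m / (1 - m)) - √(1 - m) * amF m φ) = π / 2 - φ := by
  rw [← ellK_dual_sub_amF_dual_pi_div_two_sub hm, sub_sub_cancel,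
    am_amF (dual_modulus_lt_one hm)]

lemma sc_amF_mul_sc_dual (hm : m < 1) {φ : ℝ} (hsin : sin φ ≠ 0) (hcos : cos φ ≠ 0) :
    sc (amF m φ) m * sc (ellK (-m / (1 - m)) - √(1 - m) * amF m φ) (-m / (1 - m)) = 1 := by
  rw [sc, sc, sn, sn, cn, cn, am_amF hm, am_dual_ellK_sub hm, sin_pi_div_two_sub,
    cos_pi_div_two_sub]
  field_simp

end DualModulus

/-- Kramers–Wannier duality for the Z-invariant Ising coupling constants:
for `k ∈ [0,1)`, dual squared modulus `(k*)² = -k²/(1-k²)` and `θ̄ ∈ (0,π/2)`,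
`sc(θ̄·2K(k)/π | k) · sc((π/2-θ̄)·2K(k*)/π | k*) = 1`. -/
theorem Z_invariant_Ising_duality (k θbar : ℝ)
    (hk : k ∈ Set.Ico (0 : ℝ) 1) (hθ : θbar ∈ Set.Ioo 0 (π / 2)) :
    sc (θbar * (2 * ellK (k ^ 2)) / π) (k ^ 2) *
      sc ((π / 2 - θbar) * (2 * ellK (-k ^ 2 / (1 - k ^ 2))) / π) (-k ^ 2 / (1 - k ^ 2)) = 1 := by
  obtain ⟨hk0, hk1⟩ := hk
  obtain ⟨hθ0, hθ1⟩ := hθ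
  have hm : k ^ 2 < 1 := by nlinarith
  have hK := ellK_pos hm
  have hu : θbar * (2 * ellK (k ^ 2)) / π ∈ Set.Ioo 0 (ellK (k ^ 2)) := by
    constructor
    · positivity
    · rw [div_lt_iff₀ pi_pos]
      nlinarith
  obtain ⟨φ, ⟨hφ0, hφ1⟩, hφ⟩ := exists_amF_eq_of_mem_Ioo hm hu
  have hdual : (π / 2 - θbar) * (2 * ellK (-k ^ 2 / (1 - k ^ 2))) / π
      = ellK (-k ^ 2 / (1 - k ^ 2)) - √(1 - k ^ 2) * amF (k ^ 2) φ := by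
    rw [hφ, ellK_dual hm]
    field_simp
  rw [hdual, ← hφ]
  exact sc_amF_mul_sc_dual hm (sin_pos_of_pos_of_lt_pi hφ0 (by linarith)).ne'
    (cos_pos_of_mem_Ioo ⟨by linarith, hφ1⟩).ne'
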